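/- arXiv:1904.00578 — 4 statements merged into one kernel-verified Lean document; each statement's English description precedes it below -/
import Mathlib

section
/- For every u ∈ ℂ with |u| < 1 and every λ ∈ ℝ, one has (1/2π) ∫_0^{2π} |1 − e^{iθ} u|^{−2λ} dθ = Σ_{k=0}^∞ binom(−λ, k)² |u|^{2k}, where binom(−λ, k) = Π_{j=0}^{k−1} (−λ−j) / k! is the generalized binomial coefficient; in particular the series on the right-hand side converges. -/
/-!
Expand `(1 - e^{iθ}u)^{-λ}` by the binomial series: it is the absolutely convergent
trigonometric series `∑ₖ binom(-λ, k) (-u)^k e^{ikθ}`, and its squared modulus is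
`|1 - e^{iθ}u|^{-2λ}`. Parseval's identity for such series (orthogonality of `e^{ikθ}` on
`[0, 2π]`) turns the integral into `2π ∑ₖ binom(-λ, k)² |u|^{2k}`.
-/

open MeasureTheory Real

/-- Generalized binomial coefficient `binom(x, k) = Π_{j<k}(x−j)/k!`. -/
noncomputable def gbinom (x : ℝ) (k : ℕ) : ℝ :=
  (∏ j ∈ Finset.range k, (x - (j : ℝ))) / (Nat.factorial k : ℝ)

open ComplexConjugate

theorem gbinom_eq_choose (x : ℝ) (k : ℕ) : gbinom x k = Ring.choose x k := by
  rw [Ring.choose_eq_smul, ← Polynomial.eval₂_smulOneHom_eq_smeval, ← Polynomial.eval_map,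
    descPochhammer_map, descPochhammer_eval_eq_prod_range, gbinom, smul_eq_mul, inv_mul_eq_div]

theorem summable_norm_gbinom_mul_pow (x : ℝ) {z : ℂ} (hz : ‖z‖ < 1) :
    Summable fun k ↦ ‖(gbinom x k : ℂ) * z ^ k‖ := by
  have hr : (‖z‖₊ : ENNReal) < (binomialSeries ℂ (x : ℂ)).radius :=
    lt_of_lt_of_le (by simpa using (show ‖z‖₊ < 1 from hz)) binomialSeries_radius_ge_one
  simpa [binomialSeries, FormalMultilinearSeries.ofScalars_norm, gbinom_eq_choose,
    Complex.ofReal_choose] using (binomialSeries ℂ (x : ℂ)).summable_norm_mul_pow hr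

theorem hasSum_gbinom_mul_pow (x : ℝ) {z : ℂ} (hz : ‖z‖ < 1) :
    HasSum (fun k ↦ (gbinom x k : ℂ) * z ^ k) ((1 + z) ^ (x : ℂ)) := by
  have h := (Complex.one_add_cpow_hasFPowerSeriesOnBall_zero (a := x)).hasSum (y := z)
    (by simpa [enorm_eq_nnnorm] using (show ‖z‖₊ < 1 from hz))
  simpa [binomialSeries, FormalMultilinearSeries.ofScalars_apply_eq, gbinom_eq_choose,
    Complex.ofReal_choose, mul_comm] using h

theorem norm_one_add_rpow_two_mul_eq_norm_tsum_sq (x : ℝ) {z : ℂ} (hz : ‖z‖ < 1) :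
    ‖1 + z‖ ^ (2 * x) = ‖∑' k, (gbinom x k : ℂ) * z ^ k‖ ^ 2 := by
  rw [(hasSum_gbinom_mul_pow x hz).tsum_eq, Complex.norm_cpow_real, ← Real.rpow_natCast,
    ← Real.rpow_mul (norm_nonneg _), Nat.cast_ofNat, mul_comm]

theorem integral_exp_mul_I_pow_mul_conj_pow (j k : ℕ) :
    ∫ θ in (0:ℝ)..2 * π, Complex.exp (θ * Complex.I) ^ j * conj (Complex.exp (θ * Complex.I) ^ k)
      = if j = k then (2 * π : ℂ) else 0 := by
  have hexp : ∀ θ : ℝ, Complex.exp (θ * Complex.I) ^ j * conj (Complex.exp (θ * Complex.I) ^ k)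
      = Complex.exp (((j : ℂ) - k) * Complex.I * θ) := fun θ ↦ by
    rw [map_pow, ← Complex.exp_conj, ← Complex.exp_nat_mul, ← Complex.exp_nat_mul,
      ← Complex.exp_add]
    simp only [map_mul, Complex.conj_ofReal, Complex.conj_I]
    ring_nf
  simp_rw [hexp]
  split_ifs with hjk
  · subst hjk
    simp
  · have hc : ((j : ℂ) - k) * Complex.I ≠ 0 :=
      mul_ne_zero (sub_ne_zero.2 (by exact_mod_cast hjk)) Complex.I_ne_zero
    have hperiod : Complex.exp (((j : ℂ) - k) * Complex.I * (2 * π : ℝ)) = 1 := by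
      convert Complex.exp_int_mul_two_pi_mul_I ((j : ℤ) - k) using 2
      push_cast
      ring
    rw [integral_exp_mul_complex hc, hperiod]
    simp

theorem Summable.norm_sq {ι E : Type*} [SeminormedAddCommGroup E] {f : ι → E}
    (hf : Summable fun i ↦ ‖f i‖) : Summable fun i ↦ ‖f i‖ ^ 2 :=
  .of_nonneg_of_le (fun _ ↦ by positivity) (fun i ↦ by
      rw [sq]
      exact mul_le_mul_of_nonneg_right (hf.le_tsum i fun _ _ ↦ norm_nonneg _) (norm_nonneg _))
    (hf.mul_left (∑' i, ‖f i‖))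

theorem hasSum_mul_conj_of_summable_norm {ι 𝕜 : Type*} [RCLike 𝕜] {f : ι → 𝕜}
    (hf : Summable fun i ↦ ‖f i‖) :
    HasSum (fun p : ι × ι ↦ f p.1 * conj (f p.2)) (‖∑' i, f i‖ ^ 2 : ℝ) := by
  have hf' : Summable fun i ↦ ‖conj (f i)‖ := by simpa only [RCLike.norm_conj] using hf
  rw [RCLike.ofReal_pow, ← RCLike.mul_conj, RCLike.conj_tsum,
    tsum_mul_tsum_of_summable_norm hf hf']
  exact (summable_mul_of_summable_norm (f := f) (g := fun i ↦ conj (f i)) hf hf').hasSum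

theorem hasSum_ite_eq_diag {ι M : Type*} [DecidableEq ι] [AddCommMonoid M] [TopologicalSpace M]
    {f : ι → M} {a : M} (hf : HasSum f a) :
    HasSum (fun p : ι × ι ↦ if p.1 = p.2 then f p.1 else 0) a := by
  have hinj : Function.Injective fun i : ι ↦ (i, i) := fun _ _ h ↦ congrArg Prod.fst h
  refine (hinj.hasSum_iff (f := fun p : ι × ι ↦ if p.1 = p.2 then f p.1 else 0) ?_).1 ?_
  · rintro ⟨i, j⟩ hij
    exact if_neg fun (h : i = j) ↦ hij ⟨i, by rw [h]⟩
  · simpa [Function.comp_def] using hf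

theorem integral_norm_tsum_mul_exp_mul_I_pow_sq {c : ℕ → ℂ} (hc : Summable fun k ↦ ‖c k‖) :
    ∫ θ in (0:ℝ)..2 * π, ‖∑' k, c k * Complex.exp (θ * Complex.I) ^ k‖ ^ 2
      = 2 * π * ∑' k, ‖c k‖ ^ 2 := by
  set e : ℝ → ℂ := fun θ ↦ Complex.exp (θ * Complex.I)
  have hterm : ∀ θ k, ‖c k * e θ ^ k‖ = ‖c k‖ := fun θ k ↦ by
    simp [e, Complex.norm_exp_ofReal_mul_I]
  have hintegral : HasSum
      (fun p : ℕ × ℕ ↦ ∫ θ in (0:ℝ)..2 * π, c p.1 * e θ ^ p.1 * conj (c p.2 * e θ ^ p.2))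
      (∫ θ in (0:ℝ)..2 * π, ((‖∑' k, c k * e θ ^ k‖ ^ 2 : ℝ) : ℂ)) :=
    intervalIntegral.hasSum_integral_of_dominated_convergence (fun p _ ↦ ‖c p.1‖ * ‖c p.2‖)
      (fun p ↦ by fun_prop)
      (fun p ↦ ae_of_all _ fun θ _ ↦ (by rw [norm_mul, RCLike.norm_conj, hterm, hterm]))
      (ae_of_all _ fun _ _ ↦ hc.mul_of_nonneg hc (fun _ ↦ norm_nonneg _) (fun _ ↦ norm_nonneg _))
      intervalIntegrable_const
      (ae_of_all _ fun θ _ ↦ hasSum_mul_conj_of_summable_norm (f := fun k ↦ c k * e θ ^ k)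
        (by simpa only [hterm] using hc))
  have hdiag : ∀ p : ℕ × ℕ, ∫ θ in (0:ℝ)..2 * π, c p.1 * e θ ^ p.1 * conj (c p.2 * e θ ^ p.2)
      = if p.1 = p.2 then ((2 * π * ‖c p.1‖ ^ 2 : ℝ) : ℂ) else 0 := fun ⟨j, k⟩ ↦ by
    have hsplit : ∀ θ, c j * e θ ^ j * conj (c k * e θ ^ k)
        = c j * conj (c k) * (e θ ^ j * conj (e θ ^ k)) := fun θ ↦ by
      rw [map_mul]
      ring
    simp_rw [hsplit]
    rw [intervalIntegral.integral_const_mul, integral_exp_mul_I_pow_mul_conj_pow]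
    split_ifs with hjk
    · subst hjk
      push_cast
      rw [Complex.mul_conj']
      ring
    · simp
  have hdiag_sum := hasSum_ite_eq_diag
    (Complex.hasSum_ofReal.2 (hc.norm_sq.hasSum.mul_left (2 * π)))
  simp only [hdiag] at hintegral
  apply Complex.ofReal_injective
  rw [← intervalIntegral.integral_ofReal]
  exact hintegral.unique hdiag_sum

/-- for `|u| < 1` and `λ ∈ ℝ`,
`(1/2π) ∫₀^{2π} |1 − e^{iθ}u|^{−2λ} dθ = Σ_k binom(−λ,k)² |u|^{2k}`,
the series on the right being convergent. -/
theorem circle_moment_series (u : ℂ) (hu : ‖u‖ < 1) (l : ℝ) :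
    Summable (fun k : ℕ => gbinom (-l) k ^ 2 * ‖u‖ ^ (2 * k)) ∧
    (1 / (2 * π)) * ∫ θ in (0:ℝ)..(2 * π),
        ‖1 - Complex.exp (θ * Complex.I) * u‖ ^ (-(2 * l))
      = ∑' k : ℕ, gbinom (-l) k ^ 2 * ‖u‖ ^ (2 * k) := by
  set c : ℕ → ℂ := fun k ↦ gbinom (-l) k * (-u) ^ k
  have hc : Summable fun k ↦ ‖c k‖ := summable_norm_gbinom_mul_pow (-l) (by rwa [norm_neg])
  have hc_sq : ∀ k, ‖c k‖ ^ 2 = gbinom (-l) k ^ 2 * ‖u‖ ^ (2 * k) := fun k ↦ by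
    simp [c, mul_pow, ← pow_mul, mul_comm k 2]
  have hexpand : ∀ θ : ℝ, ‖1 - Complex.exp (θ * Complex.I) * u‖ ^ (-(2 * l))
      = ‖∑' k, c k * Complex.exp (θ * Complex.I) ^ k‖ ^ 2 := fun θ ↦ by
    have hz : ‖Complex.exp (θ * Complex.I) * -u‖ < 1 := by
      rwa [norm_mul, norm_neg, Complex.norm_exp_ofReal_mul_I, one_mul]
    rw [sub_eq_add_neg, ← mul_neg, ← mul_neg, norm_one_add_rpow_two_mul_eq_norm_tsum_sq (-l) hz]
    congr 2
    exact tsum_congr fun k ↦ by rw [mul_pow]; ring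
  refine ⟨hc.norm_sq.congr hc_sq, ?_⟩
  rw [intervalIntegral.integral_congr fun θ _ ↦ hexpand θ,
    integral_norm_tsum_mul_exp_mul_I_pow_sq hc, tsum_congr hc_sq]
  field_simp
end

section
/- For every λ ∈ [−1, 1] and every u ∈ ℂ with |u| < 1: | (1/2π) ∫_0^{2π} |1 − e^{iθ} u|^{−2λ} dθ − 1 − λ²|u|² | ≤ |u|⁴ / (1 − |u|²). -/
/-!
With `g(θ) = (1 - e^{iθ}u)^{-λ}` the integrand is `|g(θ)|²`. The binomial series gives
`g(θ) = ∑ cₙ uⁿ e^{inθ}` with `cₙ = λ(λ+1)⋯(λ+n-1)/n!`, and `|cₙ| ≤ 1` because `|λ + k| ≤ k + 1`.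
By Parseval the mean of `|g|²` is `∑ cₙ² |u|^{2n} = 1 + λ²|u|² + ∑_{n ≥ 2} cₙ² |u|^{2n}`, and the
last sum lies between `0` and `∑_{n ≥ 2} |u|^{2n} = |u|⁴/(1 - |u|²)`.
-/

open MeasureTheory Real ComplexConjugate

section Multichoose

variable {K : Type*}

theorem Ring.succ_mul_multichoose_succ [Field K] [CharZero K] (r : K) (n : ℕ) :
    ((n : K) + 1) * Ring.multichoose r (n + 1) = (r + n) * Ring.multichoose r n := by
  have h := Ring.factorial_nsmul_multichoose_eq_ascPochhammer r (n + 1)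
  have h' := Ring.factorial_nsmul_multichoose_eq_ascPochhammer r n
  rw [Polynomial.ascPochhammer_smeval_eq_eval] at h h'
  rw [ascPochhammer_succ_eval, ← h', nsmul_eq_mul, nsmul_eq_mul, Nat.factorial_succ] at h
  push_cast at h
  apply mul_left_cancel₀ (Nat.cast_ne_zero.mpr n.factorial_ne_zero : (n.factorial : K) ≠ 0)
  linear_combination h

theorem Ring.norm_multichoose_le_one [RCLike K] {r : K} (hr : ‖r‖ ≤ 1) (n : ℕ) :
    ‖Ring.multichoose r n‖ ≤ 1 := by
  induction n with
  | zero => simp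
  | succ n ih =>
    have hrn : ‖r + n‖ ≤ n + 1 := by
      calc ‖r + n‖ ≤ ‖r‖ + n := by simpa using norm_add_le r (n : K)
        _ ≤ n + 1 := by linarith
    have key := congrArg norm (Ring.succ_mul_multichoose_succ r n)
    rw [norm_mul, norm_mul, ← Nat.cast_succ, RCLike.norm_natCast, Nat.cast_succ] at key
    refine le_of_mul_le_mul_left ?_ (by positivity : (0 : ℝ) < n + 1)
    rw [key, mul_one]
    exact mul_le_of_le_one_right (by linarith [norm_nonneg (r + n)]) ih |>.trans hrn

end Multichoose

theorem intervalIntegral.hasSum_integral_of_norm_le {ι E : Type*} [Countable ι]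
    [NormedAddCommGroup E] [NormedSpace ℝ E] {F : ι → ℝ → E} {f : ℝ → E} {c : ι → ℝ} {a b : ℝ}
    (hF : ∀ i, Continuous (F i)) (hFc : ∀ i t, ‖F i t‖ ≤ c i) (hc : Summable c)
    (hf : ∀ t, HasSum (F · t) (f t)) :
    HasSum (fun i => ∫ t in a..b, F i t) (∫ t in a..b, f t) :=
  intervalIntegral.hasSum_integral_of_dominated_convergence (fun i _ => c i)
    (fun i => (hF i).aestronglyMeasurable) (fun i => ae_of_all _ fun t _ => hFc i t)
    (ae_of_all _ fun _ _ => hc) intervalIntegrable_const (ae_of_all _ fun t _ => hf t)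

namespace Complex

theorem hasSum_multichoose_mul_pow (a : ℂ) {w : ℂ} (hw : ‖w‖ < 1) :
    HasSum (fun n => Ring.multichoose a n * w ^ n) ((1 - w) ^ (-a)) := by
  have hw' : w ∈ Metric.eball (0 : ℂ) 1 := by
    rw [Metric.mem_eball, edist_zero_right, ← ENNReal.coe_one, enorm_lt_coe]
    exact_mod_cast hw
  simpa [FormalMultilinearSeries.ofScalars_apply_eq, Ring.multichoose_eq, cpow_neg,
    mul_comm] using (one_div_one_sub_cpow_hasFPowerSeriesOnBall_zero a).hasSum hw'

theorem integral_exp_int_mul_mul_I (k : ℤ) :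
    ∫ θ in (0 : ℝ)..2 * π, exp (k * θ * I) = if k = 0 then (2 * π : ℂ) else 0 := by
  split_ifs with hk
  · simp [hk]
  · have hkI : (k : ℂ) * I ≠ 0 := mul_ne_zero (Int.cast_ne_zero.mpr hk) I_ne_zero
    have hper : exp (k * I * (2 * π : ℝ)) = 1 := by
      rw [show (k : ℂ) * I * (2 * π : ℝ) = k * (2 * π * I) by push_cast; ring]
      exact exp_int_mul_two_pi_mul_I k
    simp_rw [mul_right_comm _ _ I]
    rw [integral_exp_mul_complex hkI, hper]
    simp

noncomputable def fourierSum (b : ℕ → ℂ) (θ : ℝ) : ℂ := ∑' n, b n * exp (n * θ * I)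

variable {b : ℕ → ℂ}

theorem norm_exp_natCast_mul_mul_I (n : ℕ) (θ : ℝ) : ‖exp (n * θ * I)‖ = 1 := by
  simpa using norm_exp_ofReal_mul_I (n * θ)

theorem hasSum_fourierSum (hb : Summable (‖b ·‖)) (θ : ℝ) :
    HasSum (fun n => b n * exp (n * θ * I)) (fourierSum b θ) :=
  (hb.of_norm_bounded fun n => by rw [norm_mul, norm_exp_natCast_mul_mul_I, mul_one]).hasSum

theorem norm_fourierSum_le (hb : Summable (‖b ·‖)) (θ : ℝ) :
    ‖fourierSum b θ‖ ≤ ∑' n, ‖b n‖ := by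
  calc ‖fourierSum b θ‖ ≤ ∑' n, ‖b n * exp (n * θ * I)‖ :=
        norm_tsum_le_tsum_norm (hasSum_fourierSum hb θ).summable.norm
    _ = ∑' n, ‖b n‖ := by simp [norm_exp_natCast_mul_mul_I]

theorem continuous_fourierSum (hb : Summable (‖b ·‖)) : Continuous (fourierSum b) :=
  continuous_tsum (fun n => by fun_prop) hb
    fun n θ => by rw [norm_mul, norm_exp_natCast_mul_mul_I, mul_one]

theorem integral_exp_neg_mul_fourierSum (hb : Summable (‖b ·‖)) (m : ℕ) :
    ∫ θ in (0 : ℝ)..2 * π, exp (-(m * θ * I)) * fourierSum b θ = 2 * π * b m := by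
  have hsum : ∀ θ : ℝ, HasSum (fun n => b n * exp (((n - m : ℤ) : ℂ) * θ * I))
      (exp (-(m * θ * I)) * fourierSum b θ) := by
    intro θ
    refine ((hasSum_fourierSum hb θ).mul_left (exp (-(m * θ * I)))).congr_fun fun n => ?_
    rw [mul_left_comm, ← exp_add]
    push_cast
    ring_nf
  have hbound : ∀ (n : ℕ) (θ : ℝ), ‖b n * exp (((n - m : ℤ) : ℂ) * θ * I)‖ ≤ ‖b n‖ := by
    intro n θ
    rw [norm_mul, show ((n - m : ℤ) : ℂ) * θ * I = (((n - m : ℤ) * θ : ℝ) : ℂ) * I by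
      push_cast; ring, norm_exp_ofReal_mul_I, mul_one]
  refine (intervalIntegral.hasSum_integral_of_norm_le (a := 0) (b := 2 * π)
    (fun n => by fun_prop) hbound hb hsum).unique ?_
  simp_rw [intervalIntegral.integral_const_mul (𝕜 := ℂ), integral_exp_int_mul_mul_I, sub_eq_zero,
    Nat.cast_inj, mul_ite, mul_zero]
  refine (hasSum_ite_eq m (2 * π * b m)).congr_fun fun n => ?_
  split_ifs with h
  · rw [h, mul_comm]
  · rfl

theorem integral_norm_fourierSum_sq (hb : Summable (‖b ·‖)) :
    ∫ θ in (0 : ℝ)..2 * π, ‖fourierSum b θ‖ ^ 2 = 2 * π * ∑' n, ‖b n‖ ^ 2 := by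
  have hsum : ∀ θ : ℝ, HasSum (fun m => conj (b m) * (exp (-(m * θ * I)) * fourierSum b θ))
      ((‖fourierSum b θ‖ ^ 2 : ℝ) : ℂ) := by
    intro θ
    rw [ofReal_pow, ← conj_mul']
    refine (((hasSum_fourierSum hb θ).map (starRingEnd ℂ) continuous_conj).mul_right
      (fourierSum b θ)).congr_fun fun m => ?_
    simp [← exp_conj, mul_assoc]
  have hbound : ∀ (m : ℕ) (θ : ℝ),
      ‖conj (b m) * (exp (-(m * θ * I)) * fourierSum b θ)‖ ≤ ‖b m‖ * ∑' n, ‖b n‖ :=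
    fun m θ => by
      simpa [norm_exp] using mul_le_mul_of_nonneg_left (norm_fourierSum_le hb θ) (norm_nonneg (b m))
  have hint := intervalIntegral.hasSum_integral_of_norm_le (a := 0) (b := 2 * π)
    (fun m => by have := continuous_fourierSum hb; fun_prop) hbound (hb.mul_right _) hsum
  simp_rw [intervalIntegral.integral_const_mul (𝕜 := ℂ), integral_exp_neg_mul_fourierSum hb,
    intervalIntegral.integral_ofReal] at hint
  have hreal : HasSum (fun m => 2 * π * ‖b m‖ ^ 2)
      (∫ θ in (0 : ℝ)..2 * π, ‖fourierSum b θ‖ ^ 2) := by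
    refine hasSum_ofReal.mp (hint.congr_fun fun m => ?_)
    rw [mul_left_comm, conj_mul']
    push_cast
    ring
  rw [← hreal.tsum_eq, tsum_mul_left]

theorem fourierSum_multichoose_mul_pow (a : ℂ) {u : ℂ} (hu : ‖u‖ < 1) (θ : ℝ) :
    fourierSum (fun n => Ring.multichoose a n * u ^ n) θ = (1 - exp (θ * I) * u) ^ (-a) :=
  (hasSum_multichoose_mul_pow a (by simpa using hu)).congr_fun (fun n => by
    rw [mul_pow, ← exp_nat_mul]
    ring_nf) |>.tsum_eq

theorem norm_cpow_neg_ofReal_sq (z : ℂ) (x : ℝ) :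
    ‖z ^ (-(x : ℂ))‖ ^ 2 = ‖z‖ ^ (-(2 * x)) := by
  rw [← ofReal_neg, norm_cpow_real, ← rpow_natCast, ← rpow_mul (norm_nonneg z)]
  congr 1
  push_cast
  ring

end Complex

theorem abs_tsum_sub_sub_le_of_le_geometric {q : ℝ} (hq : q < 1) {a : ℕ → ℝ}
    (ha : ∀ n, 0 ≤ a n) (haq : ∀ n, a n ≤ q ^ n) :
    |∑' n, a n - a 0 - a 1| ≤ q ^ 2 / (1 - q) := by
  have hq0 : 0 ≤ q := (ha 1).trans (by simpa using haq 1)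
  have hgeo := summable_geometric_of_lt_one hq0 hq
  have hsa : Summable a := hgeo.of_nonneg_of_le ha haq
  have htail : ∑' n, a n - a 0 - a 1 = ∑' n, a (n + 2) := by
    rw [← hsa.sum_add_tsum_nat_add 2]
    simp only [Finset.sum_range_succ, Finset.sum_range_zero]
    ring
  rw [htail, abs_of_nonneg (tsum_nonneg fun n => ha _)]
  calc ∑' n, a (n + 2) ≤ ∑' n, q ^ 2 * q ^ n :=
        ((summable_nat_add_iff 2).mpr hsa).tsum_le_tsum (fun n => (haq _).trans_eq (by ring))
          (hgeo.mul_left _)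
    _ = q ^ 2 / (1 - q) := by rw [tsum_mul_left, tsum_geometric_of_lt_one hq0 hq, div_eq_mul_inv]

/-- for `λ ∈ [−1,1]` and `|u| < 1`,
`|(1/2π)∫₀^{2π}|1−e^{iθ}u|^{−2λ}dθ − 1 − λ²|u|²| ≤ |u|⁴/(1−|u|²)`. -/
theorem circle_moment_estimate_small_lambda (l : ℝ) (hl : |l| ≤ 1)
    (u : ℂ) (hu : ‖u‖ < 1) :
    |(1 / (2 * π)) * (∫ θ in (0:ℝ)..(2 * π),
          ‖1 - Complex.exp (θ * Complex.I) * u‖ ^ (-(2 * l)))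
        - 1 - l ^ 2 * ‖u‖ ^ 2|
      ≤ ‖u‖ ^ 4 / (1 - ‖u‖ ^ 2) := by
  set b : ℕ → ℂ := fun n => Ring.multichoose (l : ℂ) n * u ^ n with hb_def
  have hbu : ∀ n, ‖b n‖ ≤ ‖u‖ ^ n := fun n => by
    rw [norm_mul, norm_pow]
    refine mul_le_of_le_one_left (by positivity) (Ring.norm_multichoose_le_one ?_ n)
    rwa [Complex.norm_real, Real.norm_eq_abs]
  have hb : Summable (‖b ·‖) :=
    (summable_geometric_of_lt_one (norm_nonneg u) hu).of_nonneg_of_le (fun _ => norm_nonneg _) hbu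
  have hint : ∫ θ in (0:ℝ)..(2 * π), ‖1 - Complex.exp (θ * Complex.I) * u‖ ^ (-(2 * l)) =
      2 * π * ∑' n, ‖b n‖ ^ 2 := by
    simp_rw [← Complex.norm_cpow_neg_ofReal_sq, ← Complex.fourierSum_multichoose_mul_pow _ hu]
    exact Complex.integral_norm_fourierSum_sq hb
  rw [hint, show 1 / (2 * π) * (2 * π * ∑' n, ‖b n‖ ^ 2) = ∑' n, ‖b n‖ ^ 2 by field_simp]
  have htail := abs_tsum_sub_sub_le_of_le_geometric (a := fun n => ‖b n‖ ^ 2) (q := ‖u‖ ^ 2)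
    (by nlinarith [norm_nonneg u]) (fun _ => by positivity) fun n => by
      rw [← pow_mul, mul_comm, pow_mul]
      gcongr
      exact hbu n
  simpa [hb_def, ← pow_mul, mul_pow] using htail
end

section
/- There exists an absolute constant C > 0 such that for every u ∈ [0, 1): | (1−u²)/(2π) · ∫_0^{2π} (2 log|1 − u e^{iθ}|)² / |1 − u e^{iθ}|² dθ − 2u² | ≤ C u⁴ / (1 − u²)². -/
/-!
The normalized integral is the Poisson average `A` at the point `u` of the unit disc of
`f θ = log (1 - t) ^ 2`, where `t = 2 u cos θ - u ^ 2`. The Poisson formula for `z ↦ zⁿ` gives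
`A (cos (n θ)) = uⁿ`, so the Taylor polynomial `t ^ 2 + t ^ 3` of `f`, a trigonometric polynomial
of degree 3, averages to exactly `2 u ^ 2 - u ^ 4 + u ^ 6`; the Taylor remainder is `O(u ^ 4)`
uniformly in `θ`, which settles small `u`. For `u` bounded away from `0` the crude bound
`|log ‖1 - u e^{iθ}‖| ≤ u / (1 - u)` already suffices.
-/

open MeasureTheory Real Complex Metric

lemma abs_log_one_sub_sq_sub_le {t : ℝ} (ht : |t| ≤ 1 / 2) :
    |Real.log (1 - t) ^ 2 - (t ^ 2 + t ^ 3)| ≤ 7 * t ^ 4 := by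
  set r := Real.log (1 - t) + (t + t ^ 2 / 2) with hr_def
  have hr : |r| ≤ 2 * |t| ^ 3 := by
    have h := abs_log_sub_add_sum_range_le (ht.trans_lt (by norm_num)) 2
    simp only [Finset.sum_range_succ, Finset.sum_range_zero] at h
    calc |r| ≤ |t| ^ 3 / (1 - |t|) := by convert h using 2; norm_num [hr_def]; ring
      _ ≤ 2 * |t| ^ 3 := by
        rw [div_le_iff₀ (by linarith)]; nlinarith [pow_nonneg (abs_nonneg t) 3]
  have hexpand : Real.log (1 - t) ^ 2 - (t ^ 2 + t ^ 3)
      = r ^ 2 - 2 * r * (t + t ^ 2 / 2) + t ^ 4 / 4 := by rw [hr_def]; ring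
  have ht4 : t ^ 4 = |t| ^ 4 := by rw [pow_abs, abs_of_nonneg (by positivity)]
  have hsq : |r| ^ 2 ≤ |t| ^ 4 := by
    calc |r| ^ 2 ≤ (2 * |t| ^ 3) ^ 2 := by gcongr
      _ ≤ |t| ^ 4 := by
        have : 4 * |t| ^ 2 ≤ 1 := by nlinarith [abs_nonneg t]
        nlinarith [pow_nonneg (abs_nonneg t) 4]
  have hcross : |2 * r * (t + t ^ 2 / 2)| ≤ 5 * |t| ^ 4 := by
    have h1 : |t + t ^ 2 / 2| ≤ 5 / 4 * |t| := by
      calc |t + t ^ 2 / 2| ≤ |t| + t ^ 2 / 2 :=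
            (abs_add_le _ _).trans_eq (by rw [abs_of_nonneg (by positivity : (0:ℝ) ≤ t ^ 2 / 2)])
        _ ≤ 5 / 4 * |t| := by nlinarith [abs_nonneg t, sq_abs t]
    rw [abs_mul, abs_mul, abs_two]
    calc 2 * |r| * |t + t ^ 2 / 2| ≤ 2 * (2 * |t| ^ 3) * (5 / 4 * |t|) := by gcongr
      _ = 5 * |t| ^ 4 := by ring
  rw [hexpand, ht4, ← sq_abs r]
  rw [abs_le] at hcross ⊢
  constructor <;> nlinarith [sq_nonneg |r|, pow_nonneg (abs_nonneg t) 4]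

lemma abs_log_le_div_one_sub {x u : ℝ} (hu : u < 1) (hx₁ : 1 - u ≤ x) (hx₂ : x ≤ 1 + u) :
    |Real.log x| ≤ u / (1 - u) := by
  have hx : 0 < x := by linarith
  have h1u : 0 < 1 - u := by linarith
  have hinv : x⁻¹ ≤ 1 + u / (1 - u) := by
    calc x⁻¹ ≤ (1 - u)⁻¹ := inv_anti₀ h1u hx₁
      _ = 1 + u / (1 - u) := by field_simp; ring
  have hu_le : u ≤ u / (1 - u) := le_div_self (by linarith) h1u (by linarith)
  rw [abs_le]
  constructor
  · linarith [one_sub_inv_le_log_of_pos hx]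
  · linarith [log_le_sub_one_of_pos hx]

section OnCircle

variable (u : ℝ)

lemma norm_one_sub_mul_exp_sq (θ : ℝ) :
    ‖1 - (u : ℂ) * exp (θ * I)‖ ^ 2 = 1 - 2 * u * Real.cos θ + u ^ 2 := by
  have h : 1 - (u : ℂ) * exp (θ * I) = (1 - u * Real.cos θ : ℝ) + (-u * Real.sin θ : ℝ) * I := by
    rw [exp_mul_I]; push_cast; ring
  rw [h, Complex.sq_norm, normSq_add_mul_I]
  nlinarith [Real.sin_sq_add_cos_sq θ]

lemma norm_exp_mul_I_sub (θ : ℝ) : ‖exp (θ * I) - u‖ = ‖1 - (u : ℂ) * exp (θ * I)‖ := by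
  have h : exp (θ * I) - u = (Real.cos θ - u : ℝ) + (Real.sin θ : ℝ) * I := by
    rw [exp_mul_I]; push_cast; ring
  rw [← sq_eq_sq₀ (norm_nonneg _) (norm_nonneg _), norm_one_sub_mul_exp_sq, h, Complex.sq_norm,
    normSq_add_mul_I]
  nlinarith [Real.sin_sq_add_cos_sq θ]

lemma one_sub_abs_le_norm_one_sub_mul_exp (θ : ℝ) : 1 - |u| ≤ ‖1 - (u : ℂ) * exp (θ * I)‖ := by
  simpa [norm_exp_ofReal_mul_I] using norm_sub_norm_le (1 : ℂ) (u * exp (θ * I))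

lemma norm_one_sub_mul_exp_le (θ : ℝ) : ‖1 - (u : ℂ) * exp (θ * I)‖ ≤ 1 + |u| := by
  simpa [norm_exp_ofReal_mul_I] using norm_sub_le (1 : ℂ) (u * exp (θ * I))

lemma poissonKernel_zero_circleMap (θ : ℝ) :
    poissonKernel 0 u (circleMap 0 1 θ) = (1 - u ^ 2) / ‖1 - (u : ℂ) * exp (θ * I)‖ ^ 2 := by
  simp [poissonKernel, circleMap_zero, norm_exp_ofReal_mul_I, norm_exp_mul_I_sub]

noncomputable def poissonAverage (f : ℝ → ℝ) : ℝ :=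
  (1 - u ^ 2) / (2 * π) * ∫ θ in (0:ℝ)..(2 * π), f θ / ‖1 - (u : ℂ) * exp (θ * I)‖ ^ 2

noncomputable def logSqOnCircle (θ : ℝ) : ℝ :=
  (2 * Real.log ‖1 - (u : ℂ) * exp (θ * I)‖) ^ 2

lemma logSqOnCircle_eq (θ : ℝ) :
    logSqOnCircle u θ = Real.log (1 - (2 * u * Real.cos θ - u ^ 2)) ^ 2 := by
  rw [logSqOnCircle, show (2 : ℝ) = (2 : ℕ) by norm_num, ← Real.log_pow, Nat.cast_ofNat,
    norm_one_sub_mul_exp_sq]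
  ring_nf

lemma poissonAverage_const_mul (c : ℝ) (f : ℝ → ℝ) :
    poissonAverage u (fun θ => c * f θ) = c * poissonAverage u f := by
  simp_rw [poissonAverage, mul_div_assoc, intervalIntegral.integral_const_mul]
  ring

variable {u}

lemma norm_one_sub_mul_exp_pos (hu : |u| < 1) (θ : ℝ) : 0 < ‖1 - (u : ℂ) * exp (θ * I)‖ :=
  (sub_pos.2 hu).trans_le (one_sub_abs_le_norm_one_sub_mul_exp u θ)

lemma continuous_logSqOnCircle (hu : |u| < 1) : Continuous (logSqOnCircle u) := by
  have := fun θ => (norm_one_sub_mul_exp_pos hu θ).ne'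
  unfold logSqOnCircle
  fun_prop (disch := assumption)

lemma intervalIntegrable_div_norm_one_sub_mul_exp_sq (hu : |u| < 1) {f : ℝ → ℝ}
    (hf : Continuous f) :
    IntervalIntegrable (fun θ => f θ / ‖1 - (u : ℂ) * exp (θ * I)‖ ^ 2) volume 0 (2 * π) := by
  have := fun θ => pow_ne_zero 2 (norm_one_sub_mul_exp_pos hu θ).ne'
  apply Continuous.intervalIntegrable
  fun_prop (disch := assumption)

lemma poissonAverage_sub (hu : |u| < 1) {f g : ℝ → ℝ} (hf : Continuous f) (hg : Continuous g) :
    poissonAverage u (fun θ => f θ - g θ) = poissonAverage u f - poissonAverage u g := by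
  simp_rw [poissonAverage, sub_div]
  rw [intervalIntegral.integral_sub (intervalIntegrable_div_norm_one_sub_mul_exp_sq hu hf)
    (intervalIntegrable_div_norm_one_sub_mul_exp_sq hu hg), mul_sub]

lemma poissonAverage_sum (hu : |u| < 1) {ι : Type*} (s : Finset ι) {f : ι → ℝ → ℝ}
    (hf : ∀ i ∈ s, Continuous (f i)) :
    poissonAverage u (fun θ => ∑ i ∈ s, f i θ) = ∑ i ∈ s, poissonAverage u (f i) := by
  simp_rw [poissonAverage, Finset.sum_div]
  rw [intervalIntegral.integral_finsetSum
    (fun i hi => intervalIntegrable_div_norm_one_sub_mul_exp_sq hu (hf i hi)), Finset.mul_sum]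

lemma poissonAverage_mono (hu : |u| < 1) {f g : ℝ → ℝ} (hf : Continuous f) (hg : Continuous g)
    (hfg : ∀ θ, f θ ≤ g θ) : poissonAverage u f ≤ poissonAverage u g := by
  have h1u : 0 ≤ 1 - u ^ 2 := by nlinarith [sq_abs u, abs_nonneg u]
  apply mul_le_mul_of_nonneg_left _ (by positivity)
  exact intervalIntegral.integral_mono_on (by positivity)
    (intervalIntegrable_div_norm_one_sub_mul_exp_sq hu hf)
    (intervalIntegrable_div_norm_one_sub_mul_exp_sq hu hg)
    fun θ _ => div_le_div_of_nonneg_right (hfg θ) (sq_nonneg _)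

/-- The Poisson integral formula for `z ↦ zⁿ`, read off on the real part. -/
lemma poissonAverage_cos_nat_mul (hu : |u| < 1) (n : ℕ) :
    poissonAverage u (fun θ => Real.cos (n * θ)) = u ^ n := by
  have hpk : ∀ θ : ℝ, (poissonKernel 0 u • fun z : ℂ => z ^ n) (circleMap 0 1 θ)
      = ((1 - u ^ 2) / ‖1 - (u : ℂ) * exp (θ * I)‖ ^ 2 : ℝ) • exp (θ * I) ^ n := by
    intro θ
    rw [Pi.smul_apply', poissonKernel_zero_circleMap, circleMap_zero, ofReal_one, one_mul]
  have hint : CircleIntegrable (poissonKernel 0 u • fun z : ℂ => z ^ n) 0 1 := by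
    unfold CircleIntegrable
    simp_rw [hpk]
    apply Continuous.intervalIntegrable
    have := fun θ => pow_ne_zero 2 (norm_one_sub_mul_exp_pos hu θ).ne'
    fun_prop (disch := assumption)
  have hu' : (u : ℂ) ∈ ball (0 : ℂ) 1 := by simpa using hu
  have h := congrArg re ((differentiable_pow n).diffContOnCl.circleAverage_poissonKernel_smul hu')
  rw [← reCLM_apply, ← reCLM.circleAverage_comp_comm hint, circleAverage_def] at h
  have hcos : ∀ θ : ℝ, (exp (n * (θ * I))).re = Real.cos (n * θ) := fun θ => by
    rw [← mul_assoc, ← ofReal_natCast, ← ofReal_mul, exp_ofReal_mul_I_re]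
  simp only [Function.comp_apply, hpk, reCLM_apply, smul_re, ← Complex.exp_nat_mul, hcos,
    smul_eq_mul, ← ofReal_pow, ofReal_re] at h
  have hswap : ∀ θ : ℝ, (1 - u ^ 2) / ‖1 - (u : ℂ) * exp (θ * I)‖ ^ 2 * Real.cos (n * θ)
      = (1 - u ^ 2) * (Real.cos (n * θ) / ‖1 - (u : ℂ) * exp (θ * I)‖ ^ 2) := fun θ => by ring
  rw [poissonAverage, ← h]
  simp_rw [hswap, intervalIntegral.integral_const_mul]
  ring

lemma poissonAverage_const (hu : |u| < 1) (c : ℝ) : poissonAverage u (fun _ => c) = c := by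
  have h := poissonAverage_const_mul u c (fun θ => Real.cos ((0 : ℕ) * θ))
  rw [poissonAverage_cos_nat_mul hu 0] at h
  simpa using h

lemma abs_poissonAverage_le (hu : |u| < 1) {f : ℝ → ℝ} (hf : Continuous f) {M : ℝ}
    (hM : ∀ θ, |f θ| ≤ M) : |poissonAverage u f| ≤ M := by
  rw [abs_le]
  constructor
  · simpa [poissonAverage_const hu] using
      poissonAverage_mono hu continuous_const hf fun θ => neg_le_of_abs_le (hM θ)
  · simpa [poissonAverage_const hu] using
      poissonAverage_mono hu hf continuous_const fun θ => le_of_abs_le (hM θ)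

end OnCircle

section Estimates

variable {u : ℝ}

lemma poissonAverage_sq_add_cube (hu : |u| < 1) :
    poissonAverage u (fun θ => (2 * u * Real.cos θ - u ^ 2) ^ 2 + (2 * u * Real.cos θ - u ^ 2) ^ 3)
      = 2 * u ^ 2 - u ^ 4 + u ^ 6 := by
  -- the cosine coefficients of `t ^ 2 + t ^ 3`, from `cos² = (1 + cos 2θ) / 2` and
  -- `cos³ = (3 cos θ + cos 3θ) / 4`
  let a : Fin 4 → ℝ :=
    ![2 * u ^ 2 - 5 * u ^ 4 - u ^ 6, 2 * u ^ 3 + 6 * u ^ 5, 2 * u ^ 2 - 6 * u ^ 4, 2 * u ^ 3]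
  have hcos : (fun θ => (2 * u * Real.cos θ - u ^ 2) ^ 2 + (2 * u * Real.cos θ - u ^ 2) ^ 3)
      = fun θ => ∑ n : Fin 4, a n * Real.cos ((n : ℕ) * θ) := by
    ext θ
    simp only [Fin.sum_univ_four, Fin.isValue, Matrix.cons_val_zero, Fin.coe_ofNat_eq_mod,
      Nat.zero_mod, CharP.cast_eq_zero, zero_mul, Real.cos_zero, mul_one, Matrix.cons_val_one,
      Nat.one_mod, Nat.cast_one, one_mul, Matrix.cons_val, Nat.reduceMod, Nat.cast_ofNat,
      Real.cos_two_mul, Nat.mod_succ, Real.cos_three_mul, a]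
    ring
  rw [hcos, poissonAverage_sum hu _ fun n _ => by fun_prop]
  simp only [poissonAverage_const_mul, poissonAverage_cos_nat_mul hu, Fin.sum_univ_four,
    Fin.isValue, Matrix.cons_val_zero, Fin.coe_ofNat_eq_mod, Nat.zero_mod, pow_zero, mul_one,
    Matrix.cons_val_one, Nat.one_mod, pow_one, Matrix.cons_val, Nat.reduceMod, Nat.mod_succ, a]
  ring

lemma abs_logSqOnCircle_sub_le (hu : |u| ≤ 1 / 6) (θ : ℝ) :
    |logSqOnCircle u θ - ((2 * u * Real.cos θ - u ^ 2) ^ 2 + (2 * u * Real.cos θ - u ^ 2) ^ 3)|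
      ≤ 567 * u ^ 4 := by
  set t := 2 * u * Real.cos θ - u ^ 2
  have ht : |t| ≤ 3 * |u| := by
    have hc : |2 * u * Real.cos θ| ≤ 2 * |u| := by
      rw [abs_mul, abs_mul, abs_two]
      nlinarith [abs_cos_le_one θ, abs_nonneg u]
    calc |t| ≤ |2 * u * Real.cos θ| + |u ^ 2| := abs_sub _ _
      _ ≤ 2 * |u| + |u| := by rw [abs_pow]; nlinarith [abs_nonneg u]
      _ = 3 * |u| := by ring
  have ht4 : t ^ 4 ≤ 81 * u ^ 4 := by
    have h4 : Even 4 := ⟨2, rfl⟩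
    calc t ^ 4 = |t| ^ 4 := (h4.pow_abs t).symm
      _ ≤ (3 * |u|) ^ 4 := by gcongr
      _ = 81 * u ^ 4 := by rw [mul_pow, h4.pow_abs]; norm_num
  rw [logSqOnCircle_eq]
  linarith [abs_log_one_sub_sq_sub_le (by linarith : |t| ≤ 1 / 2)]

lemma abs_poissonAverage_logSqOnCircle_sub_le_of_abs_le (hu : |u| ≤ 1 / 6) :
    |poissonAverage u (logSqOnCircle u) - 2 * u ^ 2| ≤ 568 * u ^ 4 := by
  have hu1 : |u| < 1 := by linarith
  have hclose : |poissonAverage u (fun θ => logSqOnCircle u θ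
      - ((2 * u * Real.cos θ - u ^ 2) ^ 2 + (2 * u * Real.cos θ - u ^ 2) ^ 3))| ≤ 567 * u ^ 4 :=
    abs_poissonAverage_le hu1 ((continuous_logSqOnCircle hu1).sub (by fun_prop))
      (abs_logSqOnCircle_sub_le hu)
  rw [poissonAverage_sub hu1 (continuous_logSqOnCircle hu1) (by fun_prop),
    poissonAverage_sq_add_cube hu1] at hclose
  have hu6 : u ^ 6 ≤ u ^ 4 := by
    have hu2 : u ^ 2 ≤ 1 := by nlinarith [sq_abs u, abs_nonneg u]
    nlinarith [mul_le_mul_of_nonneg_left hu2 (pow_nonneg (sq_nonneg u) 2)]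
  rw [abs_le] at hclose ⊢
  constructor <;> nlinarith [pow_nonneg (sq_nonneg u) 3]

lemma abs_poissonAverage_logSqOnCircle_sub_le (hu : |u| < 1) :
    |poissonAverage u (logSqOnCircle u) - 2 * u ^ 2| ≤ 18 * u ^ 2 / (1 - u ^ 2) ^ 2 := by
  have h1u : 0 < 1 - |u| := by linarith
  have h1u2 : 1 - u ^ 2 ≤ 2 * (1 - |u|) := by nlinarith [sq_abs u, abs_nonneg u]
  have h1u2_pos : 0 < 1 - u ^ 2 := by nlinarith [sq_abs u, abs_nonneg u]
  have hbound : ∀ θ, |logSqOnCircle u θ| ≤ 16 * u ^ 2 / (1 - u ^ 2) ^ 2 := by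
    intro θ
    have hlog := abs_log_le_div_one_sub (by linarith) (one_sub_abs_le_norm_one_sub_mul_exp u θ)
      (norm_one_sub_mul_exp_le u θ)
    have hfrac : |u| / (1 - |u|) ≤ 2 * |u| / (1 - u ^ 2) := by
      rw [div_le_div_iff₀ h1u h1u2_pos]
      nlinarith [abs_nonneg u]
    calc |logSqOnCircle u θ| = 4 * |Real.log ‖1 - (u : ℂ) * exp (θ * I)‖| ^ 2 := by
          rw [logSqOnCircle, abs_pow, abs_mul, abs_two]; ring
      _ ≤ 4 * (2 * |u| / (1 - u ^ 2)) ^ 2 := by gcongr; exact hlog.trans hfrac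
      _ = 16 * u ^ 2 / (1 - u ^ 2) ^ 2 := by rw [div_pow, mul_pow, sq_abs]; ring
  have hA := abs_poissonAverage_le hu (continuous_logSqOnCircle hu) hbound
  have h2u : 2 * u ^ 2 ≤ 2 * u ^ 2 / (1 - u ^ 2) ^ 2 := by
    apply le_div_self (by positivity) (by positivity)
    nlinarith [sq_nonneg u]
  calc |poissonAverage u (logSqOnCircle u) - 2 * u ^ 2|
      ≤ |poissonAverage u (logSqOnCircle u)| + 2 * u ^ 2 :=
        (abs_sub _ _).trans_eq (by rw [abs_of_nonneg (by positivity : (0:ℝ) ≤ 2 * u ^ 2)])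
    _ ≤ 16 * u ^ 2 / (1 - u ^ 2) ^ 2 + 2 * u ^ 2 / (1 - u ^ 2) ^ 2 := add_le_add hA h2u
    _ = 18 * u ^ 2 / (1 - u ^ 2) ^ 2 := by ring

end Estimates

/-- there is an absolute constant `C > 0` such that for all `u ∈ [0,1)`,
`|(1−u²)/(2π) ∫₀^{2π} (2 log|1−u e^{iθ}|)²/|1−u e^{iθ}|² dθ − 2u²| ≤ C u⁴/(1−u²)²`. -/
theorem circle_log_square_moment :
    ∃ C : ℝ, 0 < C ∧ ∀ u : ℝ, 0 ≤ u → u < 1 →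
      |((1 - u ^ 2) / (2 * π)) * (∫ θ in (0:ℝ)..(2 * π),
            (2 * Real.log ‖1 - (u : ℂ) * Complex.exp (θ * Complex.I)‖) ^ 2
              / ‖1 - (u : ℂ) * Complex.exp (θ * Complex.I)‖ ^ 2)
          - 2 * u ^ 2|
        ≤ C * u ^ 4 / (1 - u ^ 2) ^ 2 := by
  refine ⟨648, by norm_num, fun u hu0 hu1 => ?_⟩
  change |poissonAverage u (logSqOnCircle u) - 2 * u ^ 2| ≤ _
  have hden : 0 < (1 - u ^ 2) ^ 2 := pow_pos (by nlinarith) 2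
  rcases le_or_gt u (1 / 6) with hsmall | hlarge
  · calc _ ≤ 568 * u ^ 4 :=
          abs_poissonAverage_logSqOnCircle_sub_le_of_abs_le (by rwa [abs_of_nonneg hu0])
      _ ≤ 648 * u ^ 4 / (1 - u ^ 2) ^ 2 := by
          rw [le_div_iff₀ hden]
          have : (1 - u ^ 2) ^ 2 ≤ 1 := pow_le_one₀ (by nlinarith) (by nlinarith)
          nlinarith [pow_nonneg hu0 4]
  · calc _ ≤ 18 * u ^ 2 / (1 - u ^ 2) ^ 2 :=
          abs_poissonAverage_logSqOnCircle_sub_le (by rwa [abs_of_nonneg hu0])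
      _ ≤ 648 * u ^ 4 / (1 - u ^ 2) ^ 2 := by
          gcongr ?_ / _
          have : 1 / 36 ≤ u ^ 2 := by nlinarith
          nlinarith
end

section
/- For all real numbers a, q ∈ [0, 1): q · log(1 − a) ≤ log(1 − aq), and log(1 − aq) − q · log(1 − a) ≤ (1 − q) a² / (1 − a). -/
/-- for `a, q ∈ [0,1)`: `q log(1−a) ≤ log(1−aq)` and
`log(1−aq) − q log(1−a) ≤ (1−q)a²/(1−a)`. -/
theorem log_one_sub_mul_bounds (a q : ℝ)
    (ha : a ∈ Set.Ico (0 : ℝ) 1) (hq : q ∈ Set.Ico (0 : ℝ) 1) :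
    q * Real.log (1 - a) ≤ Real.log (1 - a * q) ∧
    Real.log (1 - a * q) - q * Real.log (1 - a) ≤ (1 - q) * a ^ 2 / (1 - a) := by
  obtain ⟨ha0, ha1⟩ := ha
  obtain ⟨hq0, hq1⟩ := hq
  have h1a : (0:ℝ) < 1 - a := by linarith
  have haq : (0:ℝ) < 1 - a * q := by nlinarith
  constructor
  · have hc := (strictConcaveOn_log_Ioi.concaveOn).2 (Set.mem_Ioi.2 one_pos)
      (Set.mem_Ioi.2 h1a) (by linarith : (0:ℝ) ≤ 1 - q) hq0 (by ring)
    simp only [smul_eq_mul, Real.log_one, mul_zero, mul_one, zero_add] at hc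
    have he : 1 - q + q * (1 - a) = 1 - a * q := by ring
    rwa [he] at hc
  · have h1 : Real.log (1 - a) ≤ -a := by
      have := Real.log_le_sub_one_of_pos h1a
      linarith
    have h2 : Real.log (1 - a * q) - Real.log (1 - a) ≤ (1 - a * q) / (1 - a) - 1 := by
      rw [← Real.log_div haq.ne' h1a.ne']
      exact Real.log_le_sub_one_of_pos (div_pos haq h1a)
    have he : (1 - a * q) / (1 - a) - 1 = a * (1 - q) / (1 - a) := by
      field_simp
      ring
    have h3 : (1 - q) * Real.log (1 - a) ≤ (1 - q) * (-a) := by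
      apply mul_le_mul_of_nonneg_left h1 (by linarith)
    have he2 : a * (1 - q) / (1 - a) + (1 - q) * (-a) = (1 - q) * a ^ 2 / (1 - a) := by
      field_simp
      ring
    nlinarith [h2, h3]
end
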